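/- saferAd-CP is not locking secure: for every capacity m ≥ 3 there exist a mempool state st with |st| = m and an arriving transaction ta ∉ st such that the saferAd-CP admission step declines ta (i.e., adTx(st, ta) = st) even though ta.price is strictly greater than the average price of the transactions in st, i.e., ta.price > (Σ_{tx ∈ st} tx.price) / m. (Witness: m − 1 transactions of one sender with nonces 1, …, m − 1 each of price 1, plus the single childless transaction of that sender with nonce m and price 10000; any arriving transaction of price 9999 from another sender is declined although 9999 exceeds the average price (m − 1 + 10000)/m.) -/
import Mathlib


/-- A transaction: sender, nonce (naturals) and a nonnegative rational price. -/
structure Tx where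
  sender : ℕ
  nonce : ℕ
  price : ℚ≥0
deriving DecidableEq

instance : DecidableRel ((· ≤ ·) : ℚ≥0 → ℚ≥0 → Prop) :=
  fun a b => decidable_of_iff ((a : ℚ) ≤ (b : ℚ)) (by exact_mod_cast Iff.rfl)

/-- `tx₁` is an ancestor of `tx₂`. -/
def Ancestor (tx₁ tx₂ : Tx) : Prop :=
  tx₁.sender = tx₂.sender ∧ tx₁.nonce < tx₂.nonce

instance (tx₁ tx₂ : Tx) : Decidable (Ancestor tx₁ tx₂) :=
  decidable_of_iff (tx₁.sender = tx₂.sender ∧ tx₁.nonce < tx₂.nonce) Iff.rfl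

/-- `te` is a childless transaction in the mempool state `st`. -/
def Childless (te : Tx) (st : Finset Tx) : Prop :=
  te ∈ st ∧ ∀ tx ∈ st, ¬ Ancestor te tx

/-- `pick` selects, from any nonempty mempool state, a childless transaction of
minimum price among the childless transactions of the state. -/
def ValidPick (pick : Finset Tx → Tx) : Prop :=
  ∀ st : Finset Tx, st.Nonempty →
    Childless (pick st) st ∧ ∀ tx : Tx, Childless tx st → (pick st).price ≤ tx.price

/-- The saferAd-CP admission step with capacity `m`, eviction candidate chosen by `pick`. -/
def adTx (m : ℕ) (pick : Finset Tx → Tx) (st : Finset Tx) (ta : Tx) : Finset Tx :=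
  if st.card < m then insert ta st
  else if ta.price ≤ (pick st).price then st
  else insert ta (st.erase (pick st))

/-- The state after processing the list of arriving transactions `ops` from `st₀`. -/
def run (m : ℕ) (pick : Finset Tx → Tx) (st₀ : Finset Tx) (ops : List Tx) : Finset Tx :=
  ops.foldl (adTx m pick) st₀

/-- saferAd-CP is not locking secure: for every capacity `m ≥ 3`
there exist a full mempool state `st` (with `|st| = m`) and an arriving
transaction `ta ∉ st` that the saferAd-CP admission step declines, even though
`ta.price` strictly exceeds the average price of the transactions in `st`. -/
theorem adTx_not_locking_secure (m : ℕ) (hm : 3 ≤ m)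
    (pick : Finset Tx → Tx) (hpick : ValidPick pick) :
    ∃ (st : Finset Tx) (ta : Tx),
      st.card = m ∧ ta ∉ st ∧ adTx m pick st ta = st ∧
      (∑ tx ∈ st, (tx.price : ℚ)) / (m : ℚ) < (ta.price : ℚ) := by
  classical
  set f : ℕ → Tx := fun i => ⟨0, i, if i = m then 10000 else 1⟩ with hf
  set st : Finset Tx := (Finset.Icc 1 m).image f with hst
  have hinj : Set.InjOn f (Finset.Icc 1 m) := by
    intro a _ b _ hab
    have : (f a).nonce = (f b).nonce := by rw [hab]
    simpa [hf] using this
  have hcard : st.card = m := by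
    rw [hst, Finset.card_image_of_injOn hinj, Nat.card_Icc]
    omega
  have hmem : f m ∈ st := by
    apply Finset.mem_image_of_mem
    simp; omega
  have hne : st.Nonempty := ⟨f m, hmem⟩
  -- pick st = f m
  have hpc := hpick st hne
  obtain ⟨⟨hpmem, hchl⟩, _⟩ := hpc
  obtain ⟨i, hi, hfi⟩ := Finset.mem_image.mp hpmem
  simp only [Finset.mem_Icc] at hi
  have him : i = m := by
    by_contra h
    have hlt : i < m := by omega
    exact hchl (f m) hmem (by rw [← hfi]; exact ⟨rfl, hlt⟩)
  have hpickeq : pick st = f m := by rw [← hfi, him]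
  refine ⟨st, ⟨1, 0, 9999⟩, hcard, ?_, ?_, ?_⟩
  · intro h
    obtain ⟨j, _, hj⟩ := Finset.mem_image.mp h
    have : (f j).sender = 1 := by rw [hj]
    simp [hf] at this
  · have hc : ¬ st.card < m := by omega
    have hle : (Tx.mk 1 0 9999).price ≤ (pick st).price := by
      rw [hpickeq]
      show (9999 : ℚ≥0) ≤ (f m).price
      simp [hf]
      norm_num
    unfold adTx
    rw [if_neg hc, if_pos hle]
  · have hmm : m ∈ Finset.Icc 1 m := by simp; omega
    have hsum : (∑ tx ∈ st, (tx.price : ℚ)) = (m : ℚ) + 9999 := by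
      rw [hst, Finset.sum_image hinj]
      have h1 : ∀ i ∈ Finset.Icc 1 m, ((f i).price : ℚ) = 1 + (if i = m then (9999:ℚ) else 0) := by
        intro i _
        by_cases h : i = m <;> simp [hf, h] <;> norm_num
      rw [Finset.sum_congr rfl h1, Finset.sum_add_distrib,
        Finset.sum_ite_eq' (Finset.Icc 1 m) m (fun _ => (9999:ℚ))]
      simp [hmm, Nat.card_Icc]
    rw [hsum]
    have hm' : (3 : ℚ) ≤ (m : ℚ) := by exact_mod_cast hm
    rw [div_lt_iff₀ (by linarith)]
    show ((m:ℚ) + 9999) < ((⟨1,0,9999⟩ : Tx).price : ℚ) * m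
    push_cast
    nlinarith
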